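/- For a product state ρ = ρ_A⊗ρ_B, the CCNR correlation matrix C and the ESIC correlation matrix P_s satisfy ‖C‖_tr ≤ ‖P_s‖_tr. Specifically, ‖C‖_tr = √(tr(ρ_A²)tr(ρ_B²)) and ‖P_s‖_tr = √((1+tr(ρ_A²))(1+tr(ρ_B²)))/2, and √(xy) ≤ ½√((1+x)(1+y)) for 0 ≤ x,y ≤ 1. -/

import Mathlib

open Matrix BigOperators
open scoped Kronecker ComplexOrder

/-- Trace norm (sum of singular values) of a real matrix. -/
noncomputable def traceNorm {m n : Type*} [Fintype m] [Fintype n] [DecidableEq m]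
    (M : Matrix m n ℝ) : ℝ :=
  ((Matrix.posSemidef_self_mul_conjTranspose M).1.eigenvectorUnitary.1 *
    diagonal (Real.sqrt ∘ (Matrix.posSemidef_self_mul_conjTranspose M).1.eigenvalues) *
    (star (Matrix.posSemidef_self_mul_conjTranspose M).1.eigenvectorUnitary : Matrix m m ℝ)).trace

/-- The SIC overlap condition for a family of `d²` vectors in `ℂ^d`. -/
def IsSIC (d : ℕ) (ψ : Fin (d ^ 2) → Fin d → ℂ) : Prop :=
  ∀ i j, ‖dotProduct (star (ψ i)) (ψ j)‖ ^ 2 =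
    ((if i = j then (d : ℝ) else 0) + 1) / ((d : ℝ) + 1)

/-- The SIC POVM element `Π_k = |ψ_k⟩⟨ψ_k| / d`. -/
noncomputable def sicProj (d : ℕ) (ψ : Fin (d ^ 2) → Fin d → ℂ) (k : Fin (d ^ 2)) :
    Matrix (Fin d) (Fin d) ℂ :=
  (d : ℂ)⁻¹ • vecMulVec (ψ k) (star (ψ k))

/-!
For a product state every correlation entry factorises,
`tr((ρ_A ⊗ ρ_B)(E_i ⊗ F_j)) = tr(ρ_A E_i) tr(ρ_B F_j)`, so both `C` and `P_s` are rank one and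
their trace norms are products of Euclidean norms of the two factors. For an orthonormal
Hermitian operator basis that norm is `√(tr ρ²)` by Parseval. A SIC is a 2-design,
`∑ₖ |ψₖ⟩⟨ψₖ| ⊗ |ψₖ⟩⟨ψₖ| = d/(d+1) (1 + SWAP)`, which gives
`∑ₖ ⟨ψₖ|ρ|ψₖ⟩² = d/(d+1) (1 + tr ρ²)`; the ESIC rescaling turns this into `(1 + tr ρ²)/2`.
The comparison then reduces to `4xy ≤ (1 + x)(1 + y)` for `x, y ∈ [0, 1]`, where `x, y` are the
purities.
-/

section TraceNorm

variable {m n : Type*} [Fintype m] [Fintype n] [DecidableEq m]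

open scoped MatrixOrder in
theorem traceNorm_eq_trace_of_sq_eq (M : Matrix m n ℝ) {S : Matrix m m ℝ} (hS : S.PosSemidef)
    (h : S ^ 2 = M * Mᴴ) : traceNorm M = S.trace := by
  have hMM := posSemidef_self_mul_conjTranspose M
  have hsqrt : CFC.sqrt (M * Mᴴ) = S := CFC.sqrt_unique (by rw [← sq, h]) hS.nonneg
  rw [CFC.sqrt_eq_real_sqrt _ hMM.nonneg, cfcₙ_eq_cfc, hMM.1.cfc_eq, IsHermitian.cfc,
    Unitary.conjStarAlgAut_apply] at hsqrt
  rw [traceNorm, ← hsqrt]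
  simp [RCLike.ofReal_real_eq_id]

/-- The square root of `M Mᵀ = ‖b‖² a aᵀ` is `(‖b‖ / ‖a‖) a aᵀ`. -/
theorem traceNorm_vecMulVec (a : m → ℝ) (b : n → ℝ) :
    traceNorm (vecMulVec a b) = √(a ⬝ᵥ a) * √(b ⬝ᵥ b) := by
  set s := a ⬝ᵥ a
  set t := b ⬝ᵥ b
  have hs : 0 ≤ s := dotProduct_self_star_nonneg a
  have ht : 0 ≤ t := dotProduct_self_star_nonneg b
  have hS : ((√t / √s) • vecMulVec a a).PosSemidef := by
    simpa using (posSemidef_vecMulVec_self_star a).smul (by positivity : 0 ≤ √t / √s)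
  have hsq : ((√t / √s) • vecMulVec a a) ^ 2 = vecMulVec a b * (vecMulVec a b)ᴴ := by
    rcases hs.eq_or_lt with hs0 | hs0
    · obtain rfl : a = 0 := dotProduct_self_eq_zero.mp hs0.symm
      simp
    · rw [sq, conjTranspose_vecMulVec, smul_mul_smul, vecMulVec_mul_vecMulVec,
        vecMulVec_mul_vecMulVec]
      simp only [star_trivial, vecMulVec_smul, smul_smul]
      congr 1
      rw [div_mul_div_comm, Real.mul_self_sqrt ht, Real.mul_self_sqrt hs,
        div_mul_cancel₀ _ hs0.ne']
  rw [traceNorm_eq_trace_of_sq_eq _ hS hsq, trace_smul, trace_vecMulVec]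
  rcases hs.eq_or_lt with hs0 | hs0
  · simp [← hs0]
  · have : √s ≠ 0 := Real.sqrt_ne_zero'.mpr hs0
    calc √t / √s * s = √t / √s * (√s * √s) := by rw [Real.mul_self_sqrt hs]
      _ = √s * √t := by field_simp

end TraceNorm

namespace Matrix

section Hermitian

variable {n : Type*} [Fintype n]

theorem IsHermitian.ofReal_re_trace_mul {X Y : Matrix n n ℂ} (hX : X.IsHermitian)
    (hY : Y.IsHermitian) : (((X * Y).trace.re : ℝ) : ℂ) = (X * Y).trace := by
  refine Complex.conj_eq_iff_re.mp ?_
  rw [← Complex.star_def, ← trace_conjTranspose, conjTranspose_mul, hX.eq, hY.eq, trace_mul_comm]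

theorem IsHermitian.sum_re_trace_mul_sq {ι : Type*} [Fintype ι] {X : Matrix n n ℂ}
    (hX : X.IsHermitian) {E : ι → Matrix n n ℂ} (hE : ∀ i, (E i).IsHermitian) :
    ∑ i, (X * E i).trace.re ^ 2 = (∑ i, (X * E i).trace ^ 2).re := by
  have hsum : ∑ i, (X * E i).trace ^ 2 = ((∑ i, (X * E i).trace.re ^ 2 : ℝ) : ℂ) := by
    push_cast
    exact Finset.sum_congr rfl fun i _ => by rw [hX.ofReal_re_trace_mul (hE i)]
  rw [hsum, Complex.ofReal_re]

theorem IsHermitian.re_trace_kronecker_mul_kronecker {p : Type*} [Fintype p]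
    {X E : Matrix n n ℂ} {Y F : Matrix p p ℂ} (hX : X.IsHermitian) (hE : E.IsHermitian)
    (hY : Y.IsHermitian) (hF : F.IsHermitian) :
    ((X ⊗ₖ Y) * (E ⊗ₖ F)).trace.re = (X * E).trace.re * (Y * F).trace.re := by
  rw [← mul_kronecker_mul, trace_kronecker, ← hX.ofReal_re_trace_mul hE,
    ← hY.ofReal_re_trace_mul hF, ← Complex.ofReal_mul]
  simp only [Complex.ofReal_re]

variable [DecidableEq n]

theorem IsHermitian.trace_mul_self_eq_sum_eigenvalues_sq {X : Matrix n n ℂ}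
    (hX : X.IsHermitian) : (X * X).trace = ∑ i, ((hX.eigenvalues i ^ 2 : ℝ) : ℂ) := by
  conv_lhs => rw [hX.spectral_theorem, ← map_mul, Unitary.conjStarAlgAut_apply,
    trace_mul_cycle, Unitary.coe_star_mul_self, one_mul]
  simp only [diagonal_mul_diagonal, trace_diagonal, Function.comp_apply, sq, Complex.ofReal_mul,
    Complex.coe_algebraMap]

theorem IsHermitian.re_trace_mul_self_nonneg {X : Matrix n n ℂ} (hX : X.IsHermitian) :
    0 ≤ (X * X).trace.re := by
  rw [hX.trace_mul_self_eq_sum_eigenvalues_sq, ← Complex.ofReal_sum, Complex.ofReal_re]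
  positivity

theorem PosSemidef.re_trace_mul_self_le {X : Matrix n n ℂ} (hX : X.PosSemidef) :
    (X * X).trace.re ≤ X.trace.re ^ 2 := by
  rw [hX.1.trace_mul_self_eq_sum_eigenvalues_sq, hX.1.trace_eq_sum_eigenvalues]
  simp only [Complex.re_sum, Complex.ofReal_re]
  exact Finset.sum_sq_le_sq_sum_of_nonneg fun i _ => hX.eigenvalues_nonneg i

theorem PosSemidef.re_trace_mul_self_le_one {X : Matrix n n ℂ} (hX : X.PosSemidef)
    (htr : X.trace = 1) : (X * X).trace.re ≤ 1 := by
  simpa [htr] using hX.re_trace_mul_self_le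

end Hermitian

section TraceOrthonormal

variable {K ι n : Type*} [Field K] [Fintype ι] [DecidableEq ι] [Fintype n]
  {A : ι → Matrix n n K}

theorem trace_sum_smul_mul_of_trace_mul_eq_ite
    (hA : ∀ i j, (A i * A j).trace = if i = j then 1 else 0) (c : ι → K) (j : ι) :
    ((∑ i, c i • A i) * A j).trace = c j := by
  simp [Finset.sum_mul, trace_sum, hA]

theorem linearIndependent_of_trace_mul_eq_ite
    (hA : ∀ i j, (A i * A j).trace = if i = j then 1 else 0) : LinearIndependent K A :=
  Fintype.linearIndependent_iff.mpr fun c hc j => by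
    simpa [hc] using (trace_sum_smul_mul_of_trace_mul_eq_ite hA c j).symm

theorem sum_trace_mul_smul_of_trace_mul_eq_ite
    (hA : ∀ i j, (A i * A j).trace = if i = j then 1 else 0)
    (hcard : Fintype.card ι = Fintype.card n ^ 2) (X : Matrix n n K) :
    ∑ i, (X * A i).trace • A i = X := by
  have hspan := (linearIndependent_of_trace_mul_eq_ite hA).span_eq_top_of_card_eq_finrank'
    (by simp [hcard, sq, Module.finrank_matrix])
  have hX : X ∈ Submodule.span K (Set.range A) := hspan ▸ Submodule.mem_top
  obtain ⟨c, rfl⟩ := (Submodule.mem_span_range_iff_exists_fun K).mp hX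
  simp_rw [trace_sum_smul_mul_of_trace_mul_eq_ite hA]

theorem trace_mul_self_eq_sum_trace_mul_sq
    (hA : ∀ i j, (A i * A j).trace = if i = j then 1 else 0)
    (hcard : Fintype.card ι = Fintype.card n ^ 2) (X : Matrix n n K) :
    (X * X).trace = ∑ i, (X * A i).trace ^ 2 := by
  nth_rw 2 [← sum_trace_mul_smul_of_trace_mul_eq_ite hA hcard X]
  simp [Matrix.mul_sum, trace_sum, sq]

end TraceOrthonormal

theorem IsHermitian.eq_of_trace_mul_eq {n R : Type*} [Fintype n] [CommRing R] [PartialOrder R]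
    [StarRing R] [StarOrderedRing R] [NoZeroDivisors R] {T S : Matrix n n R}
    (hT : T.IsHermitian) (hS : S.IsHermitian) (hTT : (T * T).trace = (T * S).trace)
    (hSS : (S * S).trace = (T * S).trace) : T = S := by
  rw [← sub_eq_zero, ← trace_mul_conjTranspose_self_eq_zero_iff, (hT.sub hS).eq]
  simp only [sub_mul, mul_sub, trace_sub, hTT, hSS, trace_mul_comm S T]
  ring

end Matrix

theorem Equiv.prodComm_mul_self (α : Type*) :
    (Equiv.prodComm α α * Equiv.prodComm α α : Equiv.Perm (α × α)) = 1 :=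
  Equiv.ext Prod.swap_swap

namespace Matrix

section Swap

variable (R n : Type*) [DecidableEq n] [CommRing R]

abbrev swapMatrix : Matrix (n × n) (n × n) R :=
  Equiv.Perm.permMatrix R (Equiv.prodComm n n)

variable {R n}

theorem isHermitian_swapMatrix [StarRing R] : (swapMatrix R n).IsHermitian := by
  rw [IsHermitian, conjTranspose_permMatrix, inv_eq_of_mul_eq_one_right (Equiv.prodComm_mul_self n)]

variable [Fintype n]

theorem swapMatrix_mul_self : swapMatrix R n * swapMatrix R n = 1 := by
  rw [← permMatrix_mul, Equiv.prodComm_mul_self, permMatrix_one]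

theorem trace_kronecker_mul_swapMatrix (X Y : Matrix n n R) :
    ((X ⊗ₖ Y) * swapMatrix R n).trace = (X * Y).trace := by
  simp [PEquiv.mul_toMatrix_toPEquiv, trace, Fintype.sum_prod_type, mul_apply]

theorem trace_swapMatrix : (swapMatrix R n).trace = Fintype.card n := by
  simpa using trace_kronecker_mul_swapMatrix (1 : Matrix n n R) 1

end Swap

end Matrix

namespace IsSIC

open Matrix

variable {d : ℕ} {ψ : Fin (d ^ 2) → Fin d → ℂ}

theorem trace_vecMulVec_mul_vecMulVec (h : IsSIC d ψ) (j k : Fin (d ^ 2)) :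
    (vecMulVec (ψ j) (star (ψ j)) * vecMulVec (ψ k) (star (ψ k))).trace =
      ((if j = k then (d : ℂ) else 0) + 1) / (d + 1) := by
  rw [vecMulVec_mul_vecMulVec, Matrix.trace_vecMulVec, dotProduct_smul, dotProduct_comm (ψ j),
    star_dotProduct (ψ k), smul_eq_mul, Complex.star_def, Complex.mul_conj,
    Complex.normSq_eq_norm_sq, h j k]
  split_ifs <;> push_cast <;> rfl

theorem trace_vecMulVec (h : IsSIC d ψ) (k : Fin (d ^ 2)) :
    (vecMulVec (ψ k) (star (ψ k))).trace = 1 := by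
  have hnonneg : 0 ≤ star (ψ k) ⬝ᵥ ψ k := dotProduct_star_self_nonneg _
  have hnorm : ‖star (ψ k) ⬝ᵥ ψ k‖ = 1 := by
    have hkk := h k k
    rw [if_pos rfl, div_self (by positivity)] at hkk
    exact (pow_eq_one_iff_of_nonneg (norm_nonneg _) two_ne_zero).mp hkk
  rw [Matrix.trace_vecMulVec, dotProduct_comm, Complex.eq_coe_norm_of_nonneg hnonneg, hnorm,
    Complex.ofReal_one]

theorem trace_sum_kronecker_mul_self (h : IsSIC d ψ) :
    ((∑ k, vecMulVec (ψ k) (star (ψ k)) ⊗ₖ vecMulVec (ψ k) (star (ψ k))) *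
      ∑ k, vecMulVec (ψ k) (star (ψ k)) ⊗ₖ vecMulVec (ψ k) (star (ψ k))).trace =
      2 * (d : ℂ) ^ 3 / (d + 1) := by
  have hd : (d : ℂ) + 1 ≠ 0 := Nat.cast_add_one_ne_zero d
  have hrow : ∀ j : Fin (d ^ 2), ∑ k : Fin (d ^ 2), ((if j = k then (d : ℂ) else 0) + 1) ^ 2 =
      2 * (d : ℂ) * (d + 1) := by
    intro j
    simp only [add_sq, ite_pow, ne_eq, OfNat.ofNat_ne_zero, not_false_eq_true, zero_pow, mul_ite,
      mul_zero, mul_one, one_pow, Finset.sum_add_distrib, Finset.sum_ite_eq, Finset.mem_univ,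
      ↓reduceIte, Finset.sum_const, Finset.card_univ, Fintype.card_fin, nsmul_eq_mul, Nat.cast_pow]
    ring
  simp_rw [Finset.sum_mul, Finset.mul_sum, trace_sum, ← mul_kronecker_mul, trace_kronecker,
    h.trace_vecMulVec_mul_vecMulVec, ← sq, div_pow, ← Finset.sum_div, hrow]
  simp only [Finset.sum_const, Finset.card_univ, Fintype.card_fin, nsmul_eq_mul, Nat.cast_pow]
  field_simp

/-- Both sides are Hermitian with the same Gram traces `2d³/(d+1)`, so their difference has
zero Hilbert–Schmidt norm. -/
theorem sum_kronecker_vecMulVec (h : IsSIC d ψ) :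
    ∑ k, vecMulVec (ψ k) (star (ψ k)) ⊗ₖ vecMulVec (ψ k) (star (ψ k)) =
      ((d : ℂ) / (d + 1)) • (1 + swapMatrix ℂ (Fin d)) := by
  have hd : (d : ℂ) + 1 ≠ 0 := Nat.cast_add_one_ne_zero d
  have hherm : ∀ k, (vecMulVec (ψ k) (star (ψ k))).IsHermitian := fun k =>
    (posSemidef_vecMulVec_self_star (ψ k)).isHermitian
  set T := ∑ k, vecMulVec (ψ k) (star (ψ k)) ⊗ₖ vecMulVec (ψ k) (star (ψ k))
  have htrace : T.trace = d ^ 2 := by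
    simp [T, trace_sum, trace_kronecker, h.trace_vecMulVec]
  have htrace_swap : (T * swapMatrix ℂ (Fin d)).trace = d ^ 2 := by
    simp [T, Finset.sum_mul, trace_sum, trace_kronecker_mul_swapMatrix,
      h.trace_vecMulVec_mul_vecMulVec, hd]
  have hcross : (T * (((d : ℂ) / (d + 1)) • (1 + swapMatrix ℂ (Fin d)))).trace =
      2 * (d : ℂ) ^ 3 / (d + 1) := by
    rw [mul_smul_comm, trace_smul, mul_add, mul_one, trace_add, htrace, htrace_swap, smul_eq_mul]
    ring
  refine IsHermitian.eq_of_trace_mul_eq ?_ ?_ ?_ ?_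
  · simp only [T, IsHermitian, conjTranspose_sum, conjTranspose_kronecker, (hherm _).eq]
  · exact (isHermitian_one.add isHermitian_swapMatrix).smul
      ((IsSelfAdjoint.natCast d).div ((IsSelfAdjoint.natCast d).add (.one ℂ)))
  · rw [hcross, h.trace_sum_kronecker_mul_self]
  · rw [hcross, smul_mul_smul, trace_smul, add_mul, mul_add, mul_add, swapMatrix_mul_self]
    simp only [mul_one, one_mul, trace_add, trace_one, Fintype.card_prod, Fintype.card_fin,
      Nat.cast_mul, trace_swapMatrix, smul_eq_mul]
    field_simp
    ring

theorem sum_trace_mul_vecMulVec_sq (h : IsSIC d ψ) (X : Matrix (Fin d) (Fin d) ℂ) :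
    ∑ k, (X * vecMulVec (ψ k) (star (ψ k))).trace ^ 2 =
      d / (d + 1) * (X.trace ^ 2 + (X * X).trace) := by
  calc ∑ k, (X * vecMulVec (ψ k) (star (ψ k))).trace ^ 2
      = ((X ⊗ₖ X) * ∑ k, vecMulVec (ψ k) (star (ψ k)) ⊗ₖ vecMulVec (ψ k) (star (ψ k))).trace := by
        simp only [Matrix.mul_sum, trace_sum, ← mul_kronecker_mul, trace_kronecker, sq]
    _ = d / (d + 1) * (X.trace ^ 2 + (X * X).trace) := by
        rw [h.sum_kronecker_vecMulVec, mul_smul_comm, trace_smul, mul_add, mul_one, trace_add,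
          trace_kronecker, trace_kronecker_mul_swapMatrix, sq, smul_eq_mul]

theorem sum_trace_mul_smul_sicProj_sq (h : IsSIC d ψ) (hd : d ≠ 0)
    (X : Matrix (Fin d) (Fin d) ℂ) :
    ∑ k, (X * ((√((d : ℝ) * ((d : ℝ) + 1) / 2) : ℂ) • sicProj d ψ k)).trace ^ 2 =
      (X.trace ^ 2 + (X * X).trace) / 2 := by
  have hr : ((√((d : ℝ) * ((d : ℝ) + 1) / 2) : ℂ)) ^ 2 = d * (d + 1) / 2 := by
    rw [← Complex.ofReal_pow, Real.sq_sqrt (by positivity)]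
    push_cast
    ring
  simp only [sicProj, smul_smul, mul_smul_comm, trace_smul, smul_eq_mul, mul_pow,
    ← Finset.mul_sum, h.sum_trace_mul_vecMulVec_sq, hr]
  field_simp

end IsSIC

theorem isHermitian_ofReal_smul_sicProj (r : ℝ) (d : ℕ) (ψ : Fin (d ^ 2) → Fin d → ℂ)
    (k : Fin (d ^ 2)) : ((r : ℂ) • sicProj d ψ k).IsHermitian := by
  have hr : IsSelfAdjoint (r : ℂ) := Complex.conj_ofReal r
  rw [sicProj]
  exact ((posSemidef_vecMulVec_self_star (ψ k)).isHermitian.smul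
    (IsSelfAdjoint.natCast d).inv₀).smul hr

theorem traceNorm_correlation_kronecker {ι κ n p : Type*} [Fintype ι] [Fintype κ]
    [DecidableEq ι] [Fintype n] [Fintype p] {ρA : Matrix n n ℂ} {ρB : Matrix p p ℂ}
    (hρA : ρA.IsHermitian) (hρB : ρB.IsHermitian) {E : ι → Matrix n n ℂ} {F : κ → Matrix p p ℂ}
    (hE : ∀ i, (E i).IsHermitian) (hF : ∀ j, (F j).IsHermitian) {M : Matrix ι κ ℝ}
    (hM : ∀ i j, M i j = ((ρA ⊗ₖ ρB) * (E i ⊗ₖ F j)).trace.re) :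
    traceNorm M = √(∑ i, (ρA * E i).trace ^ 2).re * √(∑ j, (ρB * F j).trace ^ 2).re := by
  have hrank : M = vecMulVec (fun i => (ρA * E i).trace.re) (fun j => (ρB * F j).trace.re) := by
    ext i j
    rw [hM, vecMulVec_apply, hρA.re_trace_kronecker_mul_kronecker (hE i) hρB (hF j)]
  rw [hrank, traceNorm_vecMulVec, ← hρA.sum_re_trace_mul_sq hE, ← hρB.sum_re_trace_mul_sq hF]
  simp only [dotProduct, sq]

theorem Real.sqrt_mul_le_sqrt_one_add_mul_one_add_div_two {x y : ℝ} (hx₀ : 0 ≤ x) (hx₁ : x ≤ 1)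
    (hy₀ : 0 ≤ y) (hy₁ : y ≤ 1) : √(x * y) ≤ √((1 + x) * (1 + y)) / 2 := by
  have h4 : 4 * (x * y) ≤ (1 + x) * (1 + y) := by nlinarith [mul_nonneg hx₀ hy₀]
  calc √(x * y) = √(4 * (x * y)) / 2 := by
        rw [Real.sqrt_mul zero_le_four, show (4 : ℝ) = 2 ^ 2 by norm_num, Real.sqrt_sq two_pos.le]
        ring
    _ ≤ √((1 + x) * (1 + y)) / 2 := by gcongr

theorem ccnr_le_esic_product_state (dA dB : ℕ) (hdA : 0 < dA) (hdB : 0 < dB)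
    (ρA : Matrix (Fin dA) (Fin dA) ℂ) (hρA : ρA.PosSemidef) (htrA : ρA.trace = 1)
    (ρB : Matrix (Fin dB) (Fin dB) ℂ) (hρB : ρB.PosSemidef) (htrB : ρB.trace = 1)
    (A : Fin (dA ^ 2) → Matrix (Fin dA) (Fin dA) ℂ)
    (hAh : ∀ i, (A i).IsHermitian)
    (hAon : ∀ i j, (A i * A j).trace = if i = j then 1 else 0)
    (B : Fin (dB ^ 2) → Matrix (Fin dB) (Fin dB) ℂ)
    (hBh : ∀ j, (B j).IsHermitian)
    (hBon : ∀ i j, (B i * B j).trace = if i = j then 1 else 0)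
    (ψA : Fin (dA ^ 2) → Fin dA → ℂ) (hsicA : IsSIC dA ψA)
    (ψB : Fin (dB ^ 2) → Fin dB → ℂ) (hsicB : IsSIC dB ψB)
    (EA : Fin (dA ^ 2) → Matrix (Fin dA) (Fin dA) ℂ)
    (hEA : ∀ j, EA j = (Real.sqrt ((dA : ℝ) * ((dA : ℝ) + 1) / 2) : ℂ) • sicProj dA ψA j)
    (EB : Fin (dB ^ 2) → Matrix (Fin dB) (Fin dB) ℂ)
    (hEB : ∀ k, EB k = (Real.sqrt ((dB : ℝ) * ((dB : ℝ) + 1) / 2) : ℂ) • sicProj dB ψB k)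
    (C : Matrix (Fin (dA ^ 2)) (Fin (dB ^ 2)) ℝ)
    (hC : ∀ i j, C i j = (((ρA ⊗ₖ ρB) * (A i ⊗ₖ B j)).trace).re)
    (P : Matrix (Fin (dA ^ 2)) (Fin (dB ^ 2)) ℝ)
    (hP : ∀ i j, P i j = (((ρA ⊗ₖ ρB) * (EA i ⊗ₖ EB j)).trace).re) :
    traceNorm C = Real.sqrt ((ρA * ρA).trace.re * (ρB * ρB).trace.re) ∧
      traceNorm P = Real.sqrt ((1 + (ρA * ρA).trace.re) * (1 + (ρB * ρB).trace.re)) / 2 ∧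
      traceNorm C ≤ traceNorm P := by
  set x := (ρA * ρA).trace.re
  set y := (ρB * ρB).trace.re
  have hx₀ : 0 ≤ x := hρA.1.re_trace_mul_self_nonneg
  have hy₀ : 0 ≤ y := hρB.1.re_trace_mul_self_nonneg
  have hx₁ : x ≤ 1 := hρA.re_trace_mul_self_le_one htrA
  have hy₁ : y ≤ 1 := hρB.re_trace_mul_self_le_one htrB
  have hCnorm : traceNorm C = √(x * y) := by
    rw [traceNorm_correlation_kronecker hρA.1 hρB.1 hAh hBh hC,
      ← trace_mul_self_eq_sum_trace_mul_sq hAon (by simp [sq]) ρA,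
      ← trace_mul_self_eq_sum_trace_mul_sq hBon (by simp [sq]) ρB, Real.sqrt_mul hx₀]
  have hPnorm : traceNorm P = √((1 + x) * (1 + y)) / 2 := by
    have hEAh i : (EA i).IsHermitian := hEA i ▸ isHermitian_ofReal_smul_sicProj _ _ _ i
    have hEBh j : (EB j).IsHermitian := hEB j ▸ isHermitian_ofReal_smul_sicProj _ _ _ j
    rw [traceNorm_correlation_kronecker hρA.1 hρB.1 hEAh hEBh hP]
    simp_rw [hEA, hEB, hsicA.sum_trace_mul_smul_sicProj_sq hdA.ne',
      hsicB.sum_trace_mul_smul_sicProj_sq hdB.ne', htrA, htrB]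
    simp only [one_pow, Complex.div_ofNat_re, Complex.add_re, Complex.one_re]
    rw [← Real.sqrt_mul (by linarith), div_mul_div_comm, Real.sqrt_div' _ (mul_self_nonneg 2),
      Real.sqrt_mul_self zero_le_two]
  rw [hCnorm, hPnorm]
  exact ⟨rfl, rfl, Real.sqrt_mul_le_sqrt_one_add_mul_one_add_div_two hx₀ hx₁ hy₀ hy₁⟩
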